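/- arXiv:2110.03472 — 2 statements merged into one kernel-verified Lean document; each statement's English description precedes it below -/
import Mathlib

section
/- Let D be a triangulated category with partial silting objects P and T such that susp(P) ⊆ susp(T) ⊆ P^{⊥_{>0}}. Then the truncation σ_P^{>0}T is a partial silting object of the triangulated subcategory P^{⊥_ℤ}, generating the restricted t-structure (susp(T) ∩ P^{⊥_ℤ}, T^{⊥_{≤0}} ∩ P^{⊥_ℤ}). Moreover, if T is silting in D (i.e., susp(T) = T^{⊥_{>0}}), then σ_P^{>0}T is silting in P^{⊥_ℤ}. -/
open CategoryTheory Limits Pretriangulated ZeroObject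

universe v u

namespace Paper

variable {C : Type u} [Category.{v} C] [Preadditive C] [HasZeroObject C]
  [HasShift C ℤ] [∀ n : ℤ, (CategoryTheory.shiftFunctor C n).Additive] [Pretriangulated C]
  [HasBinaryBiproducts C]

/-- A class of objects closed under isomorphism. -/
def ClosedIso (P : C → Prop) : Prop := ∀ ⦃X Y : C⦄, (X ≅ Y) → P X → P Y

/-- A class of objects closed under extensions. -/
def ExtClosed (P : C → Prop) : Prop :=
  ∀ T : Triangle C, T ∈ (distTriang C) → P T.obj₁ → P T.obj₃ → P T.obj₂

/-- A suspended subcategory: additive (iso-closed, contains 0, closed under finite sums via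
extensions), closed under the suspension `Σ = ⟦1⟧` and under extensions. -/
structure Suspended (P : C → Prop) : Prop where
  iso : ClosedIso P
  zero : P 0
  shift : ∀ ⦃X : C⦄, P X → P (X⟦(1:ℤ)⟧)
  ext : ExtClosed P

/-- A t-structure `(L, G) = (D^{≤0}, D^{>0})`: Hom-orthogonality, every object is an extension,
`L` is suspended; both classes are closed under isomorphism. -/
structure IsTStr (L G : C → Prop) : Prop where
  isoL : ClosedIso L
  isoG : ClosedIso G
  zeroL : L 0
  homZero : ∀ ⦃X Y : C⦄, L X → G Y → ∀ f : X ⟶ Y, f = 0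
  trunc : ∀ X : C, ∃ (A B : C) (f : A ⟶ X) (g : X ⟶ B) (h : B ⟶ A⟦(1:ℤ)⟧),
    Triangle.mk f g h ∈ (distTriang C) ∧ L A ∧ G B
  shiftL : ∀ ⦃X : C⦄, L X → L (X⟦(1:ℤ)⟧)
  extL : ExtClosed L

/-- The right orthogonal `U^{⊥₀}` of a class of objects. -/
def rightOrth (U : C → Prop) (Y : C) : Prop := ∀ X : C, U X → ∀ f : X ⟶ Y, f = 0

/-- `Y ∈ P^{⊥_{≤ m}}`: `Hom(P, Σ^i Y) = 0` for all `i ≤ m`. -/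
def perpLe (P : C) (m : ℤ) (Y : C) : Prop := ∀ i : ℤ, i ≤ m → ∀ f : P ⟶ Y⟦i⟧, f = 0

/-- `Y ∈ P^{⊥_{> m}}`: `Hom(P, Σ^i Y) = 0` for all `i > m`. -/
def perpGt (P : C) (m : ℤ) (Y : C) : Prop := ∀ i : ℤ, m < i → ∀ f : P ⟶ Y⟦i⟧, f = 0

/-- `Y ∈ P^{⊥_ℤ}`: `Hom(P, Σ^i Y) = 0` for all integers `i`. -/
def perpZ (P : C) (Y : C) : Prop := ∀ i : ℤ, ∀ f : P ⟶ Y⟦i⟧, f = 0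

/-- `X ∈ ^{⊥_{>0}}P`: `Hom(X, Σ^i P) = 0` for all `i > 0`. -/
def leftPerpGt0 (P : C) (X : C) : Prop := ∀ i : ℤ, 0 < i → ∀ f : X ⟶ P⟦i⟧, f = 0

/-- `susp(P)`, the smallest suspended subcategory containing `P`. -/
def suspObj (P : C) (X : C) : Prop := ∀ U : C → Prop, Suspended U → U P → U X

/-- An additive subcategory closed under direct summands. -/
structure AddSub (U : C → Prop) : Prop where
  iso : ClosedIso U
  zero : U 0
  biprod : ∀ X Y : C, U X → U Y → U (X ⊞ Y)
  summand : ∀ X Y : C, U (X ⊞ Y) → U X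

/-- `add(P)`: the additive closure of `P` (finite direct sums of direct summands). -/
def addObj (P : C) (X : C) : Prop := ∀ U : C → Prop, AddSub U → U P → U X

/-- A thick triangulated subcategory. -/
structure ThickSub (U : C → Prop) : Prop where
  iso : ClosedIso U
  zero : U 0
  shift : ∀ ⦃X : C⦄, U X → ∀ n : ℤ, U (X⟦n⟧)
  ext : ExtClosed U
  summand : ∀ X Y : C, U (X ⊞ Y) → U X

/-- `thick(P)`: the smallest thick subcategory containing `P`. -/
def thickObj (P : C) (X : C) : Prop := ∀ U : C → Prop, ThickSub U → U P → U X

/-- A triangulated subcategory (iso-closed, shift-closed both ways, extension-closed). -/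
structure TriangSub (U : C → Prop) : Prop where
  iso : ClosedIso U
  zero : U 0
  shift : ∀ ⦃X : C⦄, U X → ∀ n : ℤ, U (X⟦n⟧)
  ext : ExtClosed U

/-- `P` is presilting: `Hom(P, Σ^n P) = 0` for all `n > 0`. -/
def Presilting (P : C) : Prop := ∀ n : ℤ, 0 < n → ∀ f : P ⟶ P⟦n⟧, f = 0

/-- `P` is partial silting: `(susp(P), P^{⊥_{≤0}})` is a t-structure and
`susp(P) ⊆ P^{⊥_{>0}}`. -/
def PartialSilting (P : C) : Prop :=
  IsTStr (suspObj P) (perpLe P 0) ∧ ∀ X : C, suspObj P X → perpGt P 0 X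

/-- `S` is silting: partial silting with `susp(S) = S^{⊥_{>0}}`. -/
def Silting (S : C) : Prop :=
  PartialSilting S ∧ ∀ X : C, suspObj S X ↔ perpGt S 0 X

/-- `X ∈ D^{≤ n}` for the t-structure with aisle `L`. -/
def DLe (L : C → Prop) (n : ℤ) (X : C) : Prop := L (X⟦n⟧)

/-- `X ∈ D^{> m}` for the t-structure with co-aisle `G`. -/
def DGt (G : C → Prop) (m : ℤ) (X : C) : Prop := G (X⟦m⟧)

/-- The t-structure `(L, G)` is bounded. -/
def BoundedTStr (L G : C → Prop) : Prop :=
  ∀ X : C, (∃ n : ℤ, DLe L n X) ∧ (∃ m : ℤ, DGt G m X)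

/-- `H` is (a choice of) the `i`-th cohomology `H^i(X) = σ^{≤ i} σ^{> i-1} X` of `X` with
respect to the t-structure `(L, G)`, expressed by the two truncation triangles. -/
def IsCohomAt (L G : C → Prop) (i : ℤ) (X H : C) : Prop :=
  ∃ (A B B' : C) (f : A ⟶ X) (g : X ⟶ B) (h : B ⟶ A⟦(1:ℤ)⟧)
    (f' : H ⟶ B) (g' : B ⟶ B') (h' : B' ⟶ H⟦(1:ℤ)⟧),
    Triangle.mk f g h ∈ (distTriang C) ∧ DLe L (i-1) A ∧ DGt G (i-1) B ∧
    Triangle.mk f' g' h' ∈ (distTriang C) ∧ DLe L i H ∧ DGt G i B'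

/-- The heart `D^0 = D^{≤0} ∩ D^{>-1}` of the t-structure `(L, G)`. -/
def Heart (L G : C → Prop) (X : C) : Prop := L X ∧ DGt G (-1) X

/-- A t-exact subcategory: a triangulated subcategory closed under the truncation `σ^{≤0}`
of the t-structure `(L, G)`. -/
def TExactSub (L G : C → Prop) (S : C → Prop) : Prop :=
  TriangSub S ∧
    ∀ (X A B : C) (f : A ⟶ X) (g : X ⟶ B) (h : B ⟶ A⟦(1:ℤ)⟧),
      S X → Triangle.mk f g h ∈ (distTriang C) → L A → G B → S A


/-- The class of objects `U` admits coreflections: every object has a couniversal morphism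
from `U`, i.e. the inclusion of `U` admits a right adjoint. -/
def HasCoreflections (U : C → Prop) : Prop :=
  ∀ X : C, ∃ (A : C) (ε : A ⟶ X), U A ∧
    ∀ A' : C, U A' → ∀ g : A' ⟶ X, ∃! g' : A' ⟶ A, g' ≫ ε = g

/-- `X` is a `2_S`-term object: `X ∈ add(S) * Σ add(S)`. -/
def TwoTerm (S X : C) : Prop :=
  ∃ (S₁ S₀ : C) (f : S₁ ⟶ S₀) (g : S₀ ⟶ X) (h : X ⟶ S₁⟦(1:ℤ)⟧),
    Triangle.mk f g h ∈ (distTriang C) ∧ addObj S S₁ ∧ addObj S S₀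

/-- `X` is indecomposable. -/
def Indec (X : C) : Prop :=
  ¬ IsZero X ∧ ∀ Y Z : C, (X ≅ Y ⊞ Z) → IsZero Y ∨ IsZero Z

/-- `add(A)` is contravariantly finite: every object admits a right `add(A)`-approximation. -/
def ContravFinAdd (A : C) : Prop :=
  ∀ X : C, ∃ (Q : C) (q : Q ⟶ X), addObj A Q ∧
    ∀ Q' : C, addObj A Q' → ∀ g : Q' ⟶ X, ∃ g' : Q' ⟶ Q, g' ≫ q = g

/-- `S` is a bounded silting object. -/
def BoundedSilting (S : C) : Prop :=
  Silting S ∧ BoundedTStr (suspObj S) (perpLe S 0)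

/-- Hom-finiteness of `C` over a field `k`. -/
def HomFinite (k : Type w) [Field k] [Linear k C] : Prop :=
  ∀ X Y : C, FiniteDimensional k (X ⟶ Y)

/-- The Krull–Schmidt property: every object is a finite direct sum of objects with local
endomorphism rings. -/
def KrullSchmidt : Prop :=
  ∀ X : C, ∃ l : List C, (∀ Y ∈ l, IsLocalRing (End Y)) ∧
    Nonempty (X ≅ l.foldr (· ⊞ ·) 0)

/-- A wide subcategory of the heart of the t-structure `(L, G)`: closed under isomorphisms,
extensions, kernels and cokernels (the latter two expressed via cones and cohomology). -/
structure HeartWide (L G W : C → Prop) : Prop where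
  sub : ∀ ⦃X : C⦄, W X → Heart L G X
  iso : ClosedIso W
  ext : ∀ (X Y Z : C) (f : X ⟶ Y) (g : Y ⟶ Z) (h : Z ⟶ X⟦(1:ℤ)⟧),
    W X → W Z → Heart L G Y → Triangle.mk f g h ∈ (distTriang C) → W Y
  kerCoker : ∀ (X Y Z : C) (f : X ⟶ Y) (g : Y ⟶ Z) (h : Z ⟶ X⟦(1:ℤ)⟧),
    W X → W Y → Triangle.mk f g h ∈ (distTriang C) →
    (∀ K : C, IsCohomAt L G (-1) Z K → W K) ∧ (∀ Q : C, IsCohomAt L G 0 Z Q → W Q)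

/-- The subgroup of relations defining `K₀` of the thick subcategory `S`. -/
def K0Rel (S : C → Prop) : AddSubgroup (FreeAbelianGroup C) :=
  AddSubgroup.closure
    {x | (∃ X : C, ¬ S X ∧ x = FreeAbelianGroup.of X) ∨
      ∃ T : Triangle C, T ∈ (distTriang C) ∧ S T.obj₁ ∧ S T.obj₂ ∧ S T.obj₃ ∧
        x = FreeAbelianGroup.of T.obj₂ - FreeAbelianGroup.of T.obj₁
          - FreeAbelianGroup.of T.obj₃}

/-- The Grothendieck group of the (thick) subcategory `S`. -/
abbrev K0 (S : C → Prop) := FreeAbelianGroup C ⧸ K0Rel S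

/-- The class `[X]` in the Grothendieck group. -/
def K0cls (S : C → Prop) (X : C) : K0 S :=
  QuotientAddGroup.mk (FreeAbelianGroup.of X)

/-- A `2_S`-term presilting sequence `(X₁, …, X_t)` in the ambient subcategory `Amb` with respect
to the silting object `S`, defined recursively: the last term `X` is an indecomposable `2_S`-term
presilting object, and the truncated sequence is a `2_{σ^{>0}_X T}`-term presilting sequence in
`Amb ∩ X^{⊥_ℤ}`, where `T = X ⊕ Q` is the Bongartz completion of `X`. -/
inductive PresiltSeq : (C → Prop) → C → List C → Prop
  | nil (Amb : C → Prop) (S : C) : PresiltSeq Amb S []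
  | cons (Amb : C → Prop) (S X : C) (l : List C)
      (hX : Amb X) (h2 : TwoTerm S X) (hpre : Presilting X) (hind : Indec X)
      -- Bongartz completion `T = X ⊞ Q`, via an approximation triangle `S → Q → X₀ → ΣS`
      (Q X₀ : C) (i : S ⟶ Q) (p : Q ⟶ X₀) (β : X₀ ⟶ S⟦(1:ℤ)⟧)
      (hB : Triangle.mk i p β ∈ (distTriang C)) (hX₀ : addObj X X₀)
      (happrox : ∀ X' : C, addObj X X' → ∀ g : X' ⟶ S⟦(1:ℤ)⟧, ∃ g', g' ≫ β = g)
      -- the truncation `T' = σ^{>0}_X (X ⊞ Q)`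
      (T' A : C) (f : A ⟶ X ⊞ Q) (g : X ⊞ Q ⟶ T') (h : T' ⟶ A⟦(1:ℤ)⟧)
      (hTr : Triangle.mk f g h ∈ (distTriang C)) (hA : suspObj X A) (hT' : perpLe X 0 T')
      (hrest : PresiltSeq (fun Y => Amb Y ∧ perpZ X Y) T' l) :
      PresiltSeq Amb S (l ++ [X])

/-!
Write `σ` for the truncation of the t-structure `(susp P, P^{⊥_{≤0}})`. As the fibre `A` of
`T → T'` lies in `susp P`, a map from `T` or from `T'` into a shift of an object of `P^{⊥_ℤ}`
vanishes for both or for neither; this identifies the co-aisles and gives the orthogonality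
`susp T' ⊆ T'^{⊥_{>0}}` as well as the silting part. For the aisle, the objects `Z` with
`σ Z ∈ susp T'` form a suspended subcategory containing `T`, hence all of `susp T`, and an object
of `susp T ∩ P^{⊥_ℤ}` is its own truncation. Closure under extensions comes from a five-lemma
argument which needs no octahedral axiom, only that `susp T'` lies in the co-aisle.
-/

section

omit [HasZeroObject C] [∀ n : ℤ, (shiftFunctor C n).Additive] [Pretriangulated C]
  [HasBinaryBiproducts C]

lemma hom_shift_shift_eq_zero {Q Y : C} {a b : ℤ} (h : ∀ f : Q ⟶ Y⟦a + b⟧, f = 0)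
    (f : Q ⟶ (Y⟦a⟧)⟦b⟧) : f = 0 := by
  simpa using h (f ≫ ((shiftFunctorAdd C a b).app Y).inv)

lemma perpLe_zero_shift_of_le {Q Y : C} {m n : ℤ} (hY : perpLe Q m Y) (hn : n ≤ m) :
    perpLe Q 0 (Y⟦n⟧) :=
  fun i hi => hom_shift_shift_eq_zero (hY (n + i) (by omega))

lemma perpZ_of_perpLe_of_perpGt {Q Y : C} {m : ℤ} (hLe : perpLe Q m Y) (hGt : perpGt Q m Y) :
    perpZ Q Y := fun i =>
  (le_or_gt i m).elim (hLe i) (hGt i)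

end

section

omit [HasBinaryBiproducts C]

open Preadditive

lemma Triangle.hom_obj₂_eq_zero {T : Triangle C} (hT : T ∈ distTriang C) {X : C}
    (h₁ : ∀ f : X ⟶ T.obj₁, f = 0) (h₃ : ∀ f : X ⟶ T.obj₃, f = 0) (f : X ⟶ T.obj₂) :
    f = 0 := by
  obtain ⟨g, rfl⟩ := Triangle.coyoneda_exact₂ T hT f (h₃ _)
  rw [h₁ g, zero_comp]

lemma Triangle.yoneda_exact₁ {T : Triangle C} (hT : T ∈ distTriang C) {X : C}
    (f : T.obj₁ ⟶ X) (hf : T.mor₃ ≫ f⟦(1:ℤ)⟧' = 0) : ∃ g : T.obj₂ ⟶ X, f = T.mor₁ ≫ g := by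
  obtain ⟨t, ht⟩ := Triangle.yoneda_exact₂ _ (rot_of_distTriang _ (rot_of_distTriang _ hT))
    (f⟦(1:ℤ)⟧') hf
  obtain ⟨g, rfl⟩ : ∃ g : T.obj₂ ⟶ X, g⟦(1:ℤ)⟧' = t := (shiftFunctor C (1:ℤ)).map_surjective t
  refine ⟨-g, (shiftFunctor C (1:ℤ)).map_injective ?_⟩
  rw [Functor.map_comp, Functor.map_neg, comp_neg, ← neg_comp]
  exact ht

lemma Triangle.isIso_mor₂_of_mor₁_eq_zero {T : Triangle C} (hT : T ∈ distTriang C)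
    (h₁ : T.mor₁ = 0) (h : ∀ s : T.obj₁⟦(1:ℤ)⟧ ⟶ T.obj₃, s = 0) : IsIso T.mor₂ := by
  obtain ⟨s, hs⟩ := Triangle.coyoneda_exact₁ T hT (𝟙 _)
    (by rw [h₁, Functor.map_zero, comp_zero])
  have h₃ : T.mor₃ = 0 := by rw [← Category.comp_id T.mor₃, hs, h s, zero_comp, comp_zero]
  exact (Triangle.isZero₁_iff_isIso₂ T hT).1 ((Triangle.isZero₁_iff T hT).2 ⟨h₁, h₃⟩)

lemma extClosed_perpLe (Q : C) (m : ℤ) : ExtClosed (perpLe Q m) := fun T hT h₁ h₃ i hi =>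
  Triangle.hom_obj₂_eq_zero (Triangle.shift_distinguished T hT i) (h₁ i hi) (h₃ i hi)

lemma extClosed_perpGt (Q : C) (m : ℤ) : ExtClosed (perpGt Q m) := fun T hT h₁ h₃ i hi =>
  Triangle.hom_obj₂_eq_zero (Triangle.shift_distinguished T hT i) (h₁ i hi) (h₃ i hi)

lemma suspended_perpZ (Q : C) : Suspended (perpZ Q) where
  iso X Y e hX i f := by
    simpa using hX i (f ≫ (shiftFunctor C i).map e.inv)
  zero i f := ((shiftFunctor C i).map_isZero (isZero_zero C)).eq_of_tgt f 0
  shift _ hX i := hom_shift_shift_eq_zero (hX (1 + i))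
  ext T hT h₁ h₃ i :=
    Triangle.hom_obj₂_eq_zero (Triangle.shift_distinguished T hT i) (h₁ i) (h₃ i)

lemma suspObj_self (Q : C) : suspObj Q Q := fun _ _ hQ => hQ

lemma suspended_suspObj (Q : C) : Suspended (suspObj Q) where
  iso _ _ e hX U hU hQ := hU.iso e (hX U hU hQ)
  zero _ hU _ := hU.zero
  shift _ hX U hU hQ := hU.shift (hX U hU hQ)
  ext T hT h₁ h₃ U hU hQ := hU.ext T hT (h₁ U hU hQ) (h₃ U hU hQ)

def HasFiberIn (L : C → Prop) {X Y : C} (u : X ⟶ Y) : Prop :=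
  ∃ (A : C) (a : A ⟶ X) (c : Y ⟶ A⟦(1:ℤ)⟧), Triangle.mk a u c ∈ distTriang C ∧ L A

/-- `σ^{>0} Z ∈ N`, where `σ^{>0}` is the truncation of the t-structure `(L, G)`. -/
def TruncGtIn (L G N : C → Prop) (Z : C) : Prop :=
  ∀ ⦃W : C⦄ (g : Z ⟶ W), HasFiberIn L g → G W → N W

namespace IsTStr

variable {L G : C → Prop} (hLG : IsTStr L G)
include hLG

lemma exists_eq_comp_of_hasFiberIn {X Y W : C} {u : X ⟶ Y} (hu : HasFiberIn L u) (hW : G W)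
    (f : X ⟶ W) : ∃ g : Y ⟶ W, f = u ≫ g := by
  obtain ⟨A, a, c, hT, hA⟩ := hu
  exact Triangle.yoneda_exact₂ _ hT f (hLG.homZero hA hW _)

lemma eq_zero_of_hasFiberIn {X Y W : C} {u : X ⟶ Y} (hu : HasFiberIn L u) (hW : G W)
    (f : Y ⟶ W) (hf : u ≫ f = 0) : f = 0 := by
  obtain ⟨A, a, c, hT, hA⟩ := hu
  obtain ⟨g, rfl⟩ := Triangle.yoneda_exact₃ _ hT f hf
  rw [hLG.homZero (hLG.shiftL hA) hW g]
  exact comp_zero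

lemma eq_zero_of_hasFiberIn_shift {X Y W : C} {u : X ⟶ Y} (hu : HasFiberIn L u) (hW : G W)
    (f : Y ⟶ W⟦(1:ℤ)⟧) (hf : u ≫ f = 0) : f = 0 := by
  obtain ⟨A, a, c, hT, hA⟩ := hu
  obtain ⟨r, hr⟩ := Triangle.yoneda_exact₃ _ hT f hf
  obtain ⟨q, rfl⟩ := (shiftFunctor C (1:ℤ)).map_surjective r
  have hq : q = 0 := hLG.homZero hA hW q
  exact hr.trans (by rw [hq, Functor.map_zero]; exact comp_zero)

lemma exists_eq_shift_comp_of_hasFiberIn {X Y W : C} {u : X ⟶ Y} (hu : HasFiberIn L u)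
    (hW : G W) (f : X⟦(1:ℤ)⟧ ⟶ W) : ∃ g : Y⟦(1:ℤ)⟧ ⟶ W, f = u⟦(1:ℤ)⟧' ≫ g := by
  obtain ⟨A, a, c, hT, hA⟩ := hu
  obtain ⟨g, hg⟩ := Triangle.yoneda_exact₃ _ (rot_of_distTriang _ (rot_of_distTriang _ hT)) f
    (hLG.homZero (hLG.shiftL hA) hW _)
  exact ⟨-g, hg.trans ((neg_comp _ _).trans (comp_neg _ _).symm)⟩

lemma nonempty_iso_of_hasFiberIn {Z₁ Z₂ W₁ W₂ : C} {g₁ : Z₁ ⟶ W₁} {g₂ : Z₂ ⟶ W₂}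
    (hg₁ : HasFiberIn L g₁) (hg₂ : HasFiberIn L g₂) (hW₁ : G W₁) (hW₂ : G W₂) (e : Z₁ ≅ Z₂) :
    Nonempty (W₁ ≅ W₂) := by
  obtain ⟨φ, hφ⟩ := hLG.exists_eq_comp_of_hasFiberIn hg₁ hW₂ (e.hom ≫ g₂)
  obtain ⟨ψ, hψ⟩ := hLG.exists_eq_comp_of_hasFiberIn hg₂ hW₁ (e.inv ≫ g₁)
  have hφψ : φ ≫ ψ = 𝟙 W₁ := sub_eq_zero.1 <| hLG.eq_zero_of_hasFiberIn hg₁ hW₁ _ <| by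
    rw [comp_sub, ← Category.assoc, ← hφ, Category.assoc, ← hψ, e.hom_inv_id_assoc,
      Category.comp_id, sub_self]
  have hψφ : ψ ≫ φ = 𝟙 W₂ := sub_eq_zero.1 <| hLG.eq_zero_of_hasFiberIn hg₂ hW₂ _ <| by
    rw [comp_sub, ← Category.assoc, ← hψ, Category.assoc, ← hφ, e.inv_hom_id_assoc,
      Category.comp_id, sub_self]
  exact ⟨⟨φ, ψ, hφψ, hψφ⟩⟩

lemma mem_L_of_homZero {X : C} (h : ∀ Y : C, G Y → ∀ f : X ⟶ Y, f = 0) : L X := by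
  obtain ⟨A, B, a, b, c, hT, hA, hB⟩ := hLG.trunc X
  have hB0 : IsZero B := by
    rw [IsZero.iff_id_eq_zero]
    exact hLG.eq_zero_of_hasFiberIn ⟨A, a, c, hT, hA⟩ hB _ (by rw [h B hB b, zero_comp])
  have : IsIso a := (Triangle.isZero₃_iff_isIso₁ _ hT).1 hB0
  exact hLG.isoL (asIso a) hA

lemma mem_G_of_homZero {Y : C} (h : ∀ X : C, L X → ∀ f : X ⟶ Y, f = 0) : G Y := by
  obtain ⟨A, B, a, b, c, hT, hA, hB⟩ := hLG.trunc Y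
  have : IsIso b :=
    Triangle.isIso_mor₂_of_mor₁_eq_zero hT (h A hA a) (hLG.homZero (hLG.shiftL hA) hB)
  exact hLG.isoG (asIso b).symm hB

lemma extClosed_G : ExtClosed G := fun _ hT h₁ h₃ =>
  hLG.mem_G_of_homZero fun _ hX =>
    Triangle.hom_obj₂_eq_zero hT (hLG.homZero hX h₁) (hLG.homZero hX h₃)

section

variable {M N : Triangle C} (hM : M ∈ distTriang C) (hN : N ∈ distTriang C) (φ : M ⟶ N)
  (h₁ : HasFiberIn L φ.hom₁) (h₂ : HasFiberIn L φ.hom₂)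
include hM hN h₁ h₂

lemma exists_eq_hom₃_comp {Y : C} (hY : G Y) (f : M.obj₃ ⟶ Y) :
    ∃ g : N.obj₃ ⟶ Y, f = φ.hom₃ ≫ g := by
  obtain ⟨f₂, hf₂⟩ := hLG.exists_eq_comp_of_hasFiberIn h₂ hY (M.mor₂ ≫ f)
  have hf₂₁ : N.mor₁ ≫ f₂ = 0 := hLG.eq_zero_of_hasFiberIn h₁ hY _ <| by
    rw [← Category.assoc, ← φ.comm₁, Category.assoc, ← hf₂, ← Category.assoc,
      comp_distTriang_mor_zero₁₂ _ hM, zero_comp]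
  obtain ⟨g₀, rfl⟩ := Triangle.yoneda_exact₂ N hN f₂ hf₂₁
  obtain ⟨ε, hε⟩ := Triangle.yoneda_exact₃ M hM (f - φ.hom₃ ≫ g₀) <| by
    rw [comp_sub, hf₂, ← Category.assoc M.mor₂, φ.comm₂, Category.assoc, sub_self]
  obtain ⟨ε', hε'⟩ := hLG.exists_eq_shift_comp_of_hasFiberIn h₁ hY ε
  refine ⟨g₀ + N.mor₃ ≫ ε', ?_⟩
  rw [comp_add, ← Category.assoc φ.hom₃, ← φ.comm₃, Category.assoc, ← hε', ← hε]
  exact (add_sub_cancel _ _).symm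

lemma eq_zero_of_hom₃_comp {Y : C} (hY : G Y) (f : N.obj₃ ⟶ Y⟦(1:ℤ)⟧)
    (hf : φ.hom₃ ≫ f = 0) : f = 0 := by
  have hf₂ : N.mor₂ ≫ f = 0 := hLG.eq_zero_of_hasFiberIn_shift h₂ hY _ <| by
    rw [← Category.assoc, ← φ.comm₂, Category.assoc, hf, comp_zero]
  obtain ⟨r, rfl⟩ := Triangle.yoneda_exact₃ N hN f hf₂
  obtain ⟨s, rfl⟩ := (shiftFunctor C (1:ℤ)).map_surjective r
  obtain ⟨t₀, ht₀⟩ := Triangle.yoneda_exact₁ hM (φ.hom₁ ≫ s) <| by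
    rw [Functor.map_comp, ← Category.assoc, φ.comm₃, Category.assoc, hf]
  obtain ⟨t₁, rfl⟩ := hLG.exists_eq_comp_of_hasFiberIn h₂ hY t₀
  have hs : s = N.mor₁ ≫ t₁ := sub_eq_zero.1 <| hLG.eq_zero_of_hasFiberIn h₁ hY _ <| by
    rw [comp_sub, ht₀, ← Category.assoc, φ.comm₁, Category.assoc, sub_self]
  rw [hs, Functor.map_comp, ← Category.assoc, comp_distTriang_mor_zero₃₁ _ hN, zero_comp]

theorem hasFiberIn_hom₃ : HasFiberIn L φ.hom₃ := by
  obtain ⟨A, a, c, hT⟩ := distinguished_cocone_triangle₁ φ.hom₃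
  have ha : a ≫ φ.hom₃ = 0 := comp_distTriang_mor_zero₁₂ _ hT
  have hc : φ.hom₃ ≫ c = 0 := comp_distTriang_mor_zero₂₃ _ hT
  refine ⟨A, a, c, hT, hLG.mem_L_of_homZero fun Y hY ξ => ?_⟩
  have hcξ : c ≫ ξ⟦(1:ℤ)⟧' = 0 := hLG.eq_zero_of_hom₃_comp hM hN φ h₁ h₂ hY _ <| by
    rw [← Category.assoc, hc, zero_comp]
  obtain ⟨θ, hθ⟩ : ∃ θ : M.obj₃ ⟶ Y, ξ = a ≫ θ := Triangle.yoneda_exact₁ hT ξ hcξ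
  obtain ⟨ψ, rfl⟩ := hLG.exists_eq_hom₃_comp hM hN φ h₁ h₂ hY θ
  rw [hθ, ← Category.assoc, ha, zero_comp]

end

lemma hasFiberIn_id (Z : C) : HasFiberIn L (𝟙 Z) :=
  ⟨0, 0, 0, contractible_distinguished₁ Z, hLG.zeroL⟩

lemma truncGtIn_of_hasFiberIn {N : C → Prop} (hN : ClosedIso N) {Z W : C} {g : Z ⟶ W}
    (hg : HasFiberIn L g) (hW : G W) (hWN : N W) : TruncGtIn L G N Z := fun _ _ hg' hW' =>
  let ⟨e⟩ := hLG.nonempty_iso_of_hasFiberIn hg hg' hW hW' (Iso.refl Z)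
  hN e hWN

lemma mem_of_truncGtIn {N : C → Prop} {Z : C} (hZ : TruncGtIn L G N Z) (hZG : G Z) : N Z :=
  hZ (𝟙 Z) (hLG.hasFiberIn_id Z) hZG

theorem suspended_truncGtIn {N : C → Prop} (hN : Suspended N) (hNG : ∀ W, N W → G W) :
    Suspended (TruncGtIn L G N) where
  iso Z₁ _ e hZ₁ _ g₂ hg₂ hW₂ := by
    obtain ⟨A₁, W₁, a₁, g₁, c₁, hT₁, hA₁, hW₁⟩ := hLG.trunc Z₁
    have hg₁ : HasFiberIn L g₁ := ⟨A₁, a₁, c₁, hT₁, hA₁⟩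
    obtain ⟨e'⟩ := hLG.nonempty_iso_of_hasFiberIn hg₁ hg₂ hW₁ hW₂ e
    exact hN.iso e' (hZ₁ g₁ hg₁ hW₁)
  zero := hLG.truncGtIn_of_hasFiberIn hN.iso (hLG.hasFiberIn_id 0) (hNG 0 hN.zero) hN.zero
  shift Z hZ := by
    obtain ⟨A, W, a, g, c, hT, hA, hW⟩ := hLG.trunc Z
    have hWN : N (W⟦(1:ℤ)⟧) := hN.shift (hZ g ⟨A, a, c, hT, hA⟩ hW)
    exact hLG.truncGtIn_of_hasFiberIn hN.iso
      ⟨_, _, _, Triangle.shift_distinguished _ hT 1, hLG.shiftL hA⟩ (hNG _ hWN) hWN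
  ext M hM h₁ h₃ _ g₂ hg₂ hW₂ := by
    obtain ⟨A₁, W₁, a₁, g₁, c₁, hT₁, hA₁, hW₁⟩ := hLG.trunc M.obj₁
    have hg₁ : HasFiberIn L g₁ := ⟨A₁, a₁, c₁, hT₁, hA₁⟩
    have hW₁N : N W₁ := h₁ g₁ hg₁ hW₁
    obtain ⟨u, hu⟩ := hLG.exists_eq_comp_of_hasFiberIn hg₁ hW₂ (M.mor₁ ≫ g₂)
    obtain ⟨D, v, w, hD⟩ := distinguished_cocone_triangle u
    obtain ⟨m, hm₂, hm₃⟩ := complete_distinguished_triangle_morphism M _ hM hD g₁ g₂ hu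
    let φ : M ⟶ Triangle.mk u v w := Triangle.homMk _ _ g₁ g₂ m hu hm₂ hm₃
    have hD' : G D := hLG.extClosed_G _ (rot_of_distTriang _ hD) hW₂ (hNG _ (hN.shift hW₁N))
    exact hN.ext _ hD hW₁N (h₃ m (hLG.hasFiberIn_hom₃ hM hD φ hg₁ hg₂) hD')

end IsTStr

section

variable {P T A T' : C} {f : A ⟶ T} {g : T ⟶ T'} {h : T' ⟶ A⟦(1:ℤ)⟧}

lemma hom_shift_eq_zero_of_perpZ {Q X Y : C} (hQ : IsTStr (suspObj Q) (perpLe Q 0))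
    (hX : suspObj Q X) (hY : perpZ Q Y) (i : ℤ) (φ : X ⟶ Y⟦i⟧) : φ = 0 :=
  hQ.homZero hX (perpLe_zero_shift_of_le (m := i) (fun j _ => hY j) le_rfl) φ

lemma hom_shift_eq_zero_iff_of_triangle (hP : IsTStr (suspObj P) (perpLe P 0))
    (hTr : Triangle.mk f g h ∈ distTriang C) (hA : suspObj P A) {Z : C} (hZ : perpZ P Z)
    (i : ℤ) : (∀ φ : T' ⟶ Z⟦i⟧, φ = 0) ↔ (∀ φ : T ⟶ Z⟦i⟧, φ = 0) := by
  constructor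
  · intro hT' φ
    obtain ⟨r, hr⟩ := Triangle.yoneda_exact₂ _ hTr φ (hom_shift_eq_zero_of_perpZ hP hA hZ i _)
    exact hr.trans (by rw [hT' r]; exact comp_zero)
  · intro hT φ
    obtain ⟨r, hr⟩ := Triangle.yoneda_exact₃ _ hTr φ (hT _)
    have hr0 : r = 0 :=
      hom_shift_eq_zero_of_perpZ hP ((suspended_suspObj P).shift hA) hZ i r
    exact hr.trans (by rw [hr0]; exact comp_zero)

lemma perpLe_iff_of_triangle (hP : IsTStr (suspObj P) (perpLe P 0))
    (hTr : Triangle.mk f g h ∈ distTriang C) (hA : suspObj P A) {Z : C} (hZ : perpZ P Z)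
    (m : ℤ) : perpLe T' m Z ↔ perpLe T m Z :=
  forall₂_congr fun i _ => hom_shift_eq_zero_iff_of_triangle hP hTr hA hZ i

lemma perpGt_iff_of_triangle (hP : IsTStr (suspObj P) (perpLe P 0))
    (hTr : Triangle.mk f g h ∈ distTriang C) (hA : suspObj P A) {Z : C} (hZ : perpZ P Z)
    (m : ℤ) : perpGt T' m Z ↔ perpGt T m Z :=
  forall₂_congr fun i _ => hom_shift_eq_zero_iff_of_triangle hP hTr hA hZ i

lemma suspObj_of_suspObj_of_perpZ (hP : IsTStr (suspObj P) (perpLe P 0))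
    (hTr : Triangle.mk f g h ∈ distTriang C) (hA : suspObj P A) (hT' : perpZ P T') {X : C}
    (hX : suspObj T X) (hXZ : perpZ P X) : suspObj T' X := by
  have hNG : ∀ W, suspObj T' W → perpLe P 0 W := fun W hW i _ => hW _ (suspended_perpZ P) hT' i
  have hT : TruncGtIn (suspObj P) (perpLe P 0) (suspObj T') T :=
    hP.truncGtIn_of_hasFiberIn (suspended_suspObj T').iso ⟨A, f, h, hTr, hA⟩
      (hNG T' (suspObj_self T')) (suspObj_self T')
  exact hP.mem_of_truncGtIn (hX _ (hP.suspended_truncGtIn (suspended_suspObj T') hNG) hT)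
    fun i _ => hXZ i

lemma perpZ_of_truncation (hT : IsTStr (suspObj T) (perpLe T 0)) (hPT : suspObj T P)
    (hTP : ∀ X : C, suspObj T X → perpGt P 0 X) {X A₀ B₀ : C} {f₀ : A₀ ⟶ X} {g₀ : X ⟶ B₀}
    {h₀ : B₀ ⟶ A₀⟦(1:ℤ)⟧} (ht₀ : Triangle.mk f₀ g₀ h₀ ∈ distTriang C) (hA₀ : suspObj T A₀)
    (hB₀ : perpLe T 0 B₀) (hX : perpZ P X) : perpZ P A₀ ∧ perpZ P B₀ := by
  have hB₀Le : perpLe P 0 B₀ := fun i hi => hT.homZero hPT (perpLe_zero_shift_of_le hB₀ hi)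
  have hB₀Gt : perpGt P 0 B₀ := extClosed_perpGt P 0 _ (rot_of_distTriang _ ht₀)
    (fun i _ => hX i) (hTP _ ((suspended_suspObj T).shift hA₀))
  have hA₀Le : perpLe P 0 A₀ := extClosed_perpLe P 0 _ (inv_rot_of_distTriang _ ht₀)
    (perpLe_zero_shift_of_le hB₀Le (by norm_num)) (fun i _ => hX i)
  exact ⟨perpZ_of_perpLe_of_perpGt hA₀Le (hTP A₀ hA₀), perpZ_of_perpLe_of_perpGt hB₀Le hB₀Gt⟩

end

end

/-- For partial silting objects `P`, `T` with
`susp(P) ⊆ susp(T) ⊆ P^{⊥_{>0}}`, the truncation `T' = σ_P^{>0}T` is a partial silting object of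
`P^{⊥_ℤ}` generating the restricted t-structure `(susp(T) ∩ P^{⊥_ℤ}, T^{⊥_{≤0}} ∩ P^{⊥_ℤ})`;
if `T` is silting in `D`, then `T'` is silting in `P^{⊥_ℤ}`. -/
theorem statement10 (P T : C) (hP : PartialSilting P) (hT : PartialSilting T)
    (h1 : ∀ X : C, suspObj P X → suspObj T X) (h2 : ∀ X : C, suspObj T X → perpGt P 0 X)
    -- the truncation triangle defining `T' = σ_P^{>0}T`
    (A T' : C) (f : A ⟶ T) (g : T ⟶ T') (h : T' ⟶ A⟦(1:ℤ)⟧)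
    (hTr : Triangle.mk f g h ∈ (distTriang C)) (hA : suspObj P A) (hT' : perpLe P 0 T') :
    perpZ P T' ∧
    -- aisle of the restricted t-structure: `susp(T') = susp(T) ∩ P^{⊥_ℤ}`
    (∀ X : C, suspObj T' X ↔ (suspObj T X ∧ perpZ P X)) ∧
    -- co-aisle: `(T')^{⊥_{≤0}} ∩ P^{⊥_ℤ} = T^{⊥_{≤0}} ∩ P^{⊥_ℤ}`
    (∀ Y : C, perpZ P Y → (perpLe T' 0 Y ↔ perpLe T 0 Y)) ∧
    -- `T'` is partial silting in `P^{⊥_ℤ}`: `susp(T') ⊆ (T')^{⊥_{>0}}` and truncation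
    -- triangles exist within `P^{⊥_ℤ}`
    (∀ X : C, suspObj T' X → perpGt T' 0 X) ∧
    (∀ X : C, perpZ P X →
      ∃ (A' B' : C) (f' : A' ⟶ X) (g' : X ⟶ B') (h' : B' ⟶ A'⟦(1:ℤ)⟧),
        Triangle.mk f' g' h' ∈ (distTriang C) ∧
        suspObj T' A' ∧ perpZ P A' ∧ perpLe T' 0 B' ∧ perpZ P B') ∧
    -- if `T` is silting, then `T'` is silting in `P^{⊥_ℤ}`
    ((∀ X : C, suspObj T X ↔ perpGt T 0 X) →
      ∀ X : C, perpZ P X → (suspObj T' X ↔ perpGt T' 0 X)) := by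
  have hTsusp := suspended_suspObj T
  have hT'T : suspObj T T' :=
    hTsusp.ext _ (rot_of_distTriang _ hTr) (suspObj_self T) (hTsusp.shift (h1 A hA))
  have hT'Z : perpZ P T' := perpZ_of_perpLe_of_perpGt hT' (h2 T' hT'T)
  have hsusp : ∀ X : C, suspObj T' X ↔ (suspObj T X ∧ perpZ P X) := fun X =>
    ⟨fun hX => ⟨hX _ hTsusp hT'T, hX _ (suspended_perpZ P) hT'Z⟩,
      fun hX => suspObj_of_suspObj_of_perpZ hP.1 hTr hA hT'Z hX.1 hX.2⟩
  have hGt : ∀ X : C, suspObj T' X → perpGt T' 0 X := fun X hX =>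
    (perpGt_iff_of_triangle hP.1 hTr hA ((hsusp X).1 hX).2 0).2 (hT.2 X ((hsusp X).1 hX).1)
  refine ⟨hT'Z, hsusp, fun Y hY => perpLe_iff_of_triangle hP.1 hTr hA hY 0, hGt, ?_, ?_⟩
  · intro X hX
    obtain ⟨A₀, B₀, f₀, g₀, h₀, ht₀, hA₀, hB₀⟩ := hT.1.trunc X
    obtain ⟨hA₀Z, hB₀Z⟩ := perpZ_of_truncation hT.1 (h1 P (suspObj_self P)) h2 ht₀ hA₀ hB₀ hX
    exact ⟨A₀, B₀, f₀, g₀, h₀, ht₀, (hsusp A₀).2 ⟨hA₀, hA₀Z⟩, hA₀Z,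
      (perpLe_iff_of_triangle hP.1 hTr hA hB₀Z 0).2 hB₀, hB₀Z⟩
  · intro hsilt X hX
    exact ⟨hGt X, fun hX' =>
      (hsusp X).2 ⟨(hsilt X).2 ((perpGt_iff_of_triangle hP.1 hTr hA hX 0).1 hX'), hX⟩⟩

end Paper
end

section
/- Let D be a triangulated category and P, Q objects such that P is partial silting, Q is a 2-term presilting object over some silting object, and the composition Q∘P := σ_P^{-1}(Q) = P ⊕ Q' is defined via the truncation triangle P' → Q' → Q → ΣP' with P' ∈ susp(P). Then the perpendicular category (P ⊕ Q')^{⊥_ℤ} equals P^{⊥_ℤ} ∩ Q^{⊥_ℤ}. -/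
open CategoryTheory Limits Pretriangulated ZeroObject

universe v u

namespace Paper

variable {C : Type u} [Category.{v} C] [Preadditive C] [HasZeroObject C]
  [HasShift C ℤ] [∀ n : ℤ, (CategoryTheory.shiftFunctor C n).Additive] [Pretriangulated C]
  [HasBinaryBiproducts C]

section

omit [HasZeroObject C] [∀ n : ℤ, (shiftFunctor C n).Additive] [Pretriangulated C]

variable {Y : C}

omit [HasBinaryBiproducts C] in
theorem perpZ_of_iso {X X' : C} (e : X ≅ X') (h : perpZ X Y) : perpZ X' Y := fun i f => by
  rw [← e.inv_hom_id_assoc f, h i (e.hom ≫ f), comp_zero]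

theorem perpZ_biprod_iff {X Z : C} : perpZ (X ⊞ Z) Y ↔ perpZ X Y ∧ perpZ Z Y := by
  refine ⟨fun h => ⟨fun i f => ?_, fun i f => ?_⟩, fun ⟨hX, hZ⟩ i f => ?_⟩
  · rw [← biprod.inl_fst_assoc f, h i (biprod.fst ≫ f), comp_zero]
  · rw [← biprod.inr_snd_assoc f, h i (biprod.snd ≫ f), comp_zero]
  · exact biprod.hom_ext' _ _ (by simp [hX i]) (by simp [hZ i])

end

section

omit [HasBinaryBiproducts C]

variable {Y : C}

omit [HasZeroObject C] [Pretriangulated C] in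
theorem perpZ_shift_one {X : C} (h : perpZ X Y) : perpZ (X⟦(1:ℤ)⟧) Y := fun i f => by
  let e := (shiftFunctorAdd' C (i - 1) 1 i (by ring)).app Y
  obtain ⟨g, hg⟩ := (shiftFunctor C (1:ℤ)).map_surjective (f ≫ e.hom)
  rw [← cancel_mono e.hom, zero_comp, ← hg, h (i - 1) g, Functor.map_zero]

theorem perpZ_obj₂_of_distTriang {T : Triangle C} (hT : T ∈ distTriang C)
    (h₁ : perpZ T.obj₁ Y) (h₃ : perpZ T.obj₃ Y) : perpZ T.obj₂ Y := fun i f => by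
  obtain ⟨g, rfl⟩ := Triangle.yoneda_exact₂ T hT f (h₁ i _)
  rw [h₃ i g, comp_zero]

theorem perpZ_obj₃_of_distTriang {T : Triangle C} (hT : T ∈ distTriang C)
    (h₁ : perpZ T.obj₁ Y) (h₂ : perpZ T.obj₂ Y) : perpZ T.obj₃ Y := fun i f => by
  obtain ⟨g, rfl⟩ := Triangle.yoneda_exact₃ T hT f (h₂ i _)
  rw [perpZ_shift_one h₁ i g, comp_zero]

theorem suspended_perpZ_left (Y : C) : Suspended (fun X => perpZ X Y) where
  iso _ _ e := perpZ_of_iso e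
  zero _ f := (isZero_zero C).eq_of_src f 0
  shift _ := perpZ_shift_one
  ext _ hT := perpZ_obj₂_of_distTriang hT

theorem perpZ_of_suspObj {P X : C} (hX : suspObj P X) (hP : perpZ P Y) : perpZ X Y :=
  hX _ (suspended_perpZ_left Y) hP

end

theorem statement13_general (P : C)
    (Q : C)
    (Q' P' : C) (a : P' ⟶ Q') (b : Q' ⟶ Q) (c : Q ⟶ P'⟦(1:ℤ)⟧)
    (hTr : Triangle.mk a b c ∈ (distTriang C)) (hP' : suspObj P P') :
    ∀ Y : C, perpZ (P ⊞ Q') Y ↔ (perpZ P Y ∧ perpZ Q Y) := by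
  intro Y
  rw [perpZ_biprod_iff]
  refine and_congr_right fun hP => ?_
  have hP'Y : perpZ P' Y := perpZ_of_suspObj hP' hP
  exact ⟨perpZ_obj₃_of_distTriang hTr hP'Y, perpZ_obj₂_of_distTriang hTr hP'Y⟩

/-- If the composition `Q ∘ P = σ_P^{-1}(Q) = P ⊞ Q'` is defined via a
truncation triangle `P' → Q' → Q → ΣP'` with `P' ∈ susp(P)`, then
`(P ⊞ Q')^{⊥_ℤ} = P^{⊥_ℤ} ∩ Q^{⊥_ℤ}`. -/
theorem statement13 (P : C) (hP : PartialSilting P)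
    (Q : C) (hQpre : Presilting Q) (hQperp : perpZ P Q)
    (h2 : ∃ T : C, Silting T ∧ TwoTerm T Q)
    (Q' P' : C) (a : P' ⟶ Q') (b : Q' ⟶ Q) (c : Q ⟶ P'⟦(1:ℤ)⟧)
    (hTr : Triangle.mk a b c ∈ (distTriang C)) (hP' : suspObj P P') :
    ∀ Y : C, perpZ (P ⊞ Q') Y ↔ (perpZ P Y ∧ perpZ Q Y) :=
  statement13_general P Q Q' P' a b c hTr hP'

end Paper
end
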